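/- arXiv:1107.1297 — 6 statements merged into one kernel-verified Lean document; each statement's English description precedes it below -/
import Mathlib

section
/- If α is a proper twist on G, then for all p,q ∈ G: α(p,q)·α((pq)⁻¹, pq) = α(q⁻¹,q)·α(p⁻¹,p)·α(q⁻¹,p⁻¹). -/
/-- For a proper twist, α(p,q)·α((pq)⁻¹,pq) = α(q⁻¹,q)·α(p⁻¹,p)·α(q⁻¹,p⁻¹). -/
theorem proper_twist_conj_identity {G : Type*} [Group G]
    (α : G → G → ℤ)
    (hsgn : ∀ p q : G, α p q = 1 ∨ α p q = -1)
    (hid : ∀ p : G, α 1 p = 1 ∧ α p 1 = 1)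
    (hproper : ∀ p q : G, α p q * α q q⁻¹ = α (p * q) q⁻¹ ∧ α p⁻¹ p * α p q = α p⁻¹ (p * q)) :
    ∀ p q : G, α p q * α (p * q)⁻¹ (p * q) = α q⁻¹ q * α p⁻¹ p * α q⁻¹ p⁻¹ := by
  intro p q
  have h1 := (hproper p q).1
  have h2 := (hproper q⁻¹ p⁻¹).1
  have h3 := (hproper (q⁻¹*p⁻¹) p).2
  have h4 := (hproper q⁻¹ q).1
  have h5 := (hproper (p*q) (p*q)⁻¹).2
  simp only [mul_inv_rev, inv_inv, mul_assoc, inv_mul_cancel, mul_one, mul_inv_cancel,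
    mul_inv_cancel_left, inv_mul_cancel_left, (hid _).1, (hid _).2, inv_mul_cancel_right,
    mul_inv_cancel_right] at h1 h2 h3 h4 h5 ⊢
  rw [mul_comm (α p⁻¹ p) (α q⁻¹ p⁻¹), h2]
  rcases hsgn p q with ea|ea <;>
  rcases hsgn q q⁻¹ with eb|eb <;>
  rcases hsgn (q⁻¹*p⁻¹) p with eg|eg <;>
  rcases hsgn (p*q) (q⁻¹*p⁻¹) with eh|eh <;>
  rw [ea, eb] at h1 <;> rw [eg, eh] at h3 <;> rw [eh] at h5 <;> rw [eb] at h4 <;> rw [ea, eg] <;>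
  ring_nf at h1 h3 h4 h5 ⊢ <;>
  omega
end

section
/- In a twisted group algebra over a commutative ring K with a proper twist, conjugation is an anti-homomorphism on the whole algebra: conj(xy) = conj(y)·conj(x) for all x, y. -/
/-- The twisted group algebra product on coefficient functions:
`(xy)_r = ∑_{pq = r} α(p,q) x_p y_q`. -/
def tmul {G : Type*} [Group G] [Fintype G] {K : Type*} [CommRing K]
    (α : G → G → K) (x y : G → K) : G → K :=
  fun r => ∑ p : G, α p (p⁻¹ * r) * x p * y (p⁻¹ * r)

/-- The conjugate `x̄ = ∑_p α(p,p⁻¹) x_p i_{p⁻¹}`, given by its coefficients. -/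
def tconj {G : Type*} [Group G] {K : Type*} [CommRing K]
    (α : G → G → K) (x : G → K) : G → K :=
  fun s => α s⁻¹ s * x s⁻¹

/-- The basis vector `i_p`. -/
def ibasis {G : Type*} [DecidableEq G] {K : Type*} [CommRing K] (p : G) : G → K :=
  fun s => if s = p then 1 else 0

/-- For a proper twist, conjugation is an anti-homomorphism: conj(xy) = conj(y) conj(x). -/
theorem tconj_mul {G : Type*} [Group G] [Fintype G] {K : Type*} [CommRing K]
    (α : G → G → K)
    (hsgn : ∀ p q : G, α p q = 1 ∨ α p q = -1)
    (hid : ∀ p : G, α 1 p = 1 ∧ α p 1 = 1)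
    (hproper : ∀ p q : G, α p q * α q q⁻¹ = α (p * q) q⁻¹ ∧ α p⁻¹ p * α p q = α p⁻¹ (p * q)) :
    ∀ x y : G → K, tconj α (tmul α x y) = tmul α (tconj α y) (tconj α x) := by
  have sq : ∀ p q : G, α p q * α p q = 1 := by
    intro p q
    rcases hsgn p q with h | h <;> rw [h] <;> ring
  have key : ∀ q r : G, α (q * r) (r⁻¹ * q⁻¹) * α q r
      = α r⁻¹ q⁻¹ * α r r⁻¹ * α q q⁻¹ := by
    intro q r
    have h1 := (hproper q r).1
    -- h1 : α q r * α r r⁻¹ = α (q*r) r⁻¹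
    have h4 := (hproper (q * r) r⁻¹).2
    simp only [mul_inv_rev, inv_inv, mul_inv_cancel_right] at h4
    -- h4 : α (r⁻¹*q⁻¹) (q*r) * α (q*r) r⁻¹ = α (r⁻¹*q⁻¹) q
    have h3 := (hproper r⁻¹ q⁻¹).1
    simp only [inv_inv] at h3
    -- h3 : α r⁻¹ q⁻¹ * α q⁻¹ q = α (r⁻¹*q⁻¹) q
    have h5 := (hproper q⁻¹ q).1
    simp only [inv_mul_cancel, (hid q⁻¹).1] at h5
    -- h5 : α q⁻¹ q * α q q⁻¹ = 1
    have h8 := (hproper (q * r)⁻¹ (q * r)).1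
    simp only [inv_mul_cancel, (hid _).1] at h8
    simp only [mul_inv_rev, inv_inv] at h8
    -- h8 : α (r⁻¹*q⁻¹) (q*r) * α (q*r) (r⁻¹*q⁻¹) = 1
    have h9 := sq (r⁻¹ * q⁻¹) (q * r)
    have hX : α (q * r) (r⁻¹ * q⁻¹) = α (r⁻¹ * q⁻¹) (q * r) := by
      have : α (q * r) (r⁻¹ * q⁻¹)
          = α (r⁻¹ * q⁻¹) (q * r) * (α (r⁻¹ * q⁻¹) (q * r) * α (q * r) (r⁻¹ * q⁻¹)) := by
        rw [← mul_assoc, h9, one_mul]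
      rw [this, h8, mul_one]
    rw [hX]
    have h6 := sq r r⁻¹
    have h7 := sq q q⁻¹
    linear_combination (-(α (r⁻¹ * q⁻¹) (q * r) * α q r)) * h6
      + (α (r⁻¹ * q⁻¹) (q * r) * α r r⁻¹) * h1
      + (α r r⁻¹) * h4 - (α r r⁻¹) * h3
      - (α r⁻¹ q⁻¹ * α q⁻¹ q * α r r⁻¹) * h7
      + (α r⁻¹ q⁻¹ * α r r⁻¹ * α q q⁻¹) * h5
  intro x y
  funext s
  show α s⁻¹ s * tmul α x y s⁻¹ = _
  unfold tmul tconj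
  rw [Finset.mul_sum]
  refine Fintype.sum_equiv (Equiv.mulLeft s) _ _ (fun q => ?_)
  simp only [Equiv.coe_mulLeft, mul_inv_rev, inv_mul_cancel_right, inv_inv]
  have hk := key q (q⁻¹ * s⁻¹)
  simp only [mul_inv_rev, inv_inv, mul_inv_cancel_left, mul_inv_cancel_right] at hk
  -- hk : α s⁻¹ s * α q (q⁻¹*s⁻¹) = α (s*q) q⁻¹ * α (q⁻¹*s⁻¹) (s*q) * α q q⁻¹
  linear_combination (x q * y (q⁻¹ * s⁻¹)) * hk
end

section
/- A twisted group algebra over ℝ with a proper twist is a proper *-algebra: for all x, y, z, ⟨xy, z⟩ = ⟨y, conj(x)·z⟩ and ⟨x, yz⟩ = ⟨x·conj(z), y⟩. -/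
/-- The inner product `⟨x,y⟩ = ∑_p x_p y_p` (real coefficients). -/
def tip {G : Type*} [Fintype G] (x y : G → ℝ) : ℝ := ∑ p : G, x p * y p

/-- A properly twisted group algebra over the reals is a proper *-algebra:
⟨xy, z⟩ = ⟨y, conj(x) z⟩ and ⟨x, yz⟩ = ⟨x conj(z), y⟩. -/
theorem proper_star_algebra {G : Type*} [Group G] [Fintype G]
    (α : G → G → ℝ)
    (hsgn : ∀ p q : G, α p q = 1 ∨ α p q = -1)
    (hid : ∀ p : G, α 1 p = 1 ∧ α p 1 = 1)
    (hproper : ∀ p q : G, α p q * α q q⁻¹ = α (p * q) q⁻¹ ∧ α p⁻¹ p * α p q = α p⁻¹ (p * q)) :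
    ∀ x y z : G → ℝ,
      tip (tmul α x y) z = tip y (tmul α (tconj α x) z) ∧
      tip x (tmul α y z) = tip (tmul α x (tconj α z)) y := by
  have hs : ∀ s : G, α s s⁻¹ * α s s⁻¹ = 1 := fun s => by
    rcases hsgn s s⁻¹ with h | h <;> rw [h] <;> norm_num
  have hone : ∀ p : G, α p⁻¹ p * α p p⁻¹ = 1 := fun p => by
    have h := (hproper p⁻¹ p).1
    rwa [inv_mul_cancel, (hid p⁻¹).1] at h
  have key1 : ∀ p q : G, α p⁻¹ (p * q) * α p p⁻¹ = α p q := fun p q => by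
    linear_combination (-(α p p⁻¹)) * (hproper p q).2 + α p q * hone p
  have key2 : ∀ q s : G, α (q * s) s⁻¹ * α s s⁻¹ = α q s := fun q s => by
    linear_combination (-(α s s⁻¹)) * (hproper q s).1 + α q s * hs s
  intro x y z
  constructor
  · unfold tip tmul tconj
    calc ∑ r : G, (∑ p : G, α p (p⁻¹ * r) * x p * y (p⁻¹ * r)) * z r
        = ∑ p : G, ∑ r : G, α p (p⁻¹ * r) * x p * y (p⁻¹ * r) * z r := by
          simp only [Finset.sum_mul]; exact Finset.sum_comm
      _ = ∑ p : G, ∑ q : G, α p q * x p * y q * z (p * q) := by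
          refine Finset.sum_congr rfl fun p _ => ?_
          refine ((Equiv.sum_comp (Equiv.mulLeft p)
            (fun r => α p (p⁻¹ * r) * x p * y (p⁻¹ * r) * z r)).symm.trans ?_)
          simp [inv_mul_cancel_left]
      _ = ∑ p : G, ∑ q : G, y q * (α p⁻¹ (p * q) * (α p p⁻¹ * x p) * z (p * q)) := by
          refine Finset.sum_congr rfl fun p _ => Finset.sum_congr rfl fun q _ => ?_
          linear_combination (-(x p * y q * z (p * q))) * key1 p q
      _ = ∑ s : G, ∑ q : G, y q * (α s (s⁻¹ * q) * (α s⁻¹ s * x s⁻¹) * z (s⁻¹ * q)) := by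
          rw [← Equiv.sum_comp (Equiv.inv G)
            (fun s => ∑ q : G, y q * (α s (s⁻¹ * q) * (α s⁻¹ s * x s⁻¹) * z (s⁻¹ * q)))]
          simp
      _ = ∑ q : G, y q * ∑ s : G, α s (s⁻¹ * q) * (α s⁻¹ s * x s⁻¹) * z (s⁻¹ * q) := by
          simp only [Finset.mul_sum]; exact Finset.sum_comm
  · unfold tip tmul tconj
    calc ∑ p : G, x p * ∑ q : G, α q (q⁻¹ * p) * y q * z (q⁻¹ * p)
        = ∑ q : G, ∑ p : G, x p * (α q (q⁻¹ * p) * y q * z (q⁻¹ * p)) := by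
          simp only [Finset.mul_sum]; exact Finset.sum_comm
      _ = ∑ q : G, (∑ p : G, α p (p⁻¹ * q) * x p * (α (p⁻¹ * q)⁻¹ (p⁻¹ * q) * z (p⁻¹ * q)⁻¹)) * y q := by
          refine Finset.sum_congr rfl fun q _ => ?_
          rw [Finset.sum_mul]
          refine Finset.sum_congr rfl fun p _ => ?_
          have h := key2 q (q⁻¹ * p)
          rw [mul_inv_cancel_left] at h
          simp only [mul_inv_rev, inv_inv] at h ⊢
          linear_combination (-(x p * y q * z (q⁻¹ * p))) * h
end

section
/- Suppose α is a proper twist on a group G in which every element is its own inverse, and V is the twisted group algebra over ℝ. Then for every p ∈ G and every x ∈ V, (1 - α(p,p))·⟨x, i_p x⟩ = 0. In particular, if α(p,p) = -1 then ⟨x, i_p x⟩ = 0. -/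
/-- For a proper twist on a group where every element is its own inverse,
(1 - α(p,p)) * ⟨x, i_p x⟩ = 0; in particular α(p,p) = -1 implies ⟨x, i_p x⟩ = 0. -/
theorem proper_twist_orthogonality {G : Type*} [Group G] [Fintype G] [DecidableEq G]
    (α : G → G → ℝ)
    (hsgn : ∀ p q : G, α p q = 1 ∨ α p q = -1)
    (hid : ∀ p : G, α 1 p = 1 ∧ α p 1 = 1)
    (hproper : ∀ p q : G, α p q * α q q⁻¹ = α (p * q) q⁻¹ ∧ α p⁻¹ p * α p q = α p⁻¹ (p * q))
    (hself : ∀ p : G, p⁻¹ = p) :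
    ∀ (p : G) (x : G → ℝ),
      (1 - α p p) * tip x (tmul α (ibasis p) x) = 0 ∧
      (α p p = -1 → tip x (tmul α (ibasis p) x) = 0) := by
  intro p x
  set S := tip x (tmul α (ibasis p) x) with hS
  have hpp : ∀ r : G, p * (p * r) = r := by
    intro r
    rw [← mul_assoc]
    nth_rewrite 2 [← hself p]
    rw [mul_inv_cancel, one_mul]
  have h1 : S = ∑ r : G, x r * (α p (p * r) * x (p * r)) := by
    rw [hS]
    unfold tip tmul ibasis
    refine Finset.sum_congr rfl fun r _ => ?_
    congr 1
    rw [Finset.sum_eq_single p]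
    · rw [hself]; simp
    · intro q _ hq; simp [hq]
    · simp
  have h2 : S = α p p * ∑ r : G, x (p * r) * (α p r * x r) := by
    rw [h1, Finset.mul_sum]
    refine Finset.sum_congr rfl fun r _ => ?_
    have := (hproper p r).2
    rw [hself] at this
    rw [← this]; ring
  have h3 : (∑ r : G, x (p * r) * (α p r * x r)) = S := by
    rw [h1]
    refine (Fintype.sum_bijective (fun r => p * r) (Group.mulLeft_bijective p) _ _
      fun r => ?_).symm
    rw [hpp]
  rw [h3] at h2
  constructor
  · calc (1 - α p p) * S = S - α p p * S := by ring
      _ = 0 := by rw [← h2, sub_self]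
  · intro h
    rw [h] at h2
    linarith
end

section
/- If α is a proper twist on a group G with p = p⁻¹ for all p, and α(p,p) = -1, then ⟨x·conj(x), i_p⟩ = 0 for all x in the twisted group algebra over ℝ. -/
/-- For a proper twist on a group with p = p⁻¹ for all p, if α(p,p) = -1 then
⟨x conj(x), i_p⟩ = 0. -/
theorem proper_twist_norm_orthogonality {G : Type*} [Group G] [Fintype G] [DecidableEq G]
    (α : G → G → ℝ)
    (hsgn : ∀ p q : G, α p q = 1 ∨ α p q = -1)
    (hid : ∀ p : G, α 1 p = 1 ∧ α p 1 = 1)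
    (hproper : ∀ p q : G, α p q * α q q⁻¹ = α (p * q) q⁻¹ ∧ α p⁻¹ p * α p q = α p⁻¹ (p * q))
    (hself : ∀ p : G, p⁻¹ = p) :
    ∀ (p : G) (x : G → ℝ), α p p = -1 →
      tip (tmul α x (tconj α x)) (ibasis p) = 0 := by
  intro p x hαpp
  have hsq : ∀ q : G, q * q = 1 := fun q => by
    simpa [hself q] using mul_inv_cancel q
  have hcomm : ∀ a b : G, a * b = b * a := fun a b => by
    have h := hself (a * b)
    rw [mul_inv_rev, hself a, hself b] at h
    exact h.symm
  have hpne : p ≠ 1 := by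
    intro h
    rw [h, (hid 1).1] at hαpp
    norm_num at hαpp
  -- two key identities on α
  have key1 : ∀ q : G, α q (q * p) * α (q * p) (q * p) = α p (q * p) := by
    intro q
    have h1 := (hproper q (q * p)).1
    rw [hself (q * p), ← mul_assoc, hsq q, one_mul] at h1
    exact h1
  have key2 : ∀ q : G, α (q * p) q * α q q = α p q := by
    intro q
    have h1 := (hproper (q * p) q).1
    rw [hself q, mul_assoc, hcomm p q, ← mul_assoc, hsq q, one_mul] at h1
    exact h1
  have key3 : ∀ q : G, α p (q * p) = - α p q := by
    intro q
    have h2 := (hproper p q).2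
    rw [hself p, hαpp, hcomm p q] at h2
    linarith
  -- reduce tip to a single sum
  have hred : tip (tmul α x (tconj α x)) (ibasis p)
      = ∑ q : G, α q (q * p) * x q * (α (q * p) (q * p) * x (q * p)) := by
    unfold tip tmul tconj ibasis
    simp only [mul_ite, mul_one, mul_zero]
    rw [Finset.sum_ite_eq' Finset.univ p _]
    simp only [Finset.mem_univ, if_true, hself]
  rw [hred]
  refine Finset.sum_involution (fun q _ => q * p) ?_ ?_ (fun q _ => Finset.mem_univ _) ?_
  · intro q _
    have e : q * p * p = q := by rw [mul_assoc, hsq p, mul_one]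
    rw [e]
    have hk : α q (q * p) * α (q * p) (q * p) + α (q * p) q * α q q = 0 := by
      rw [key1, key2, key3]; ring
    linear_combination (x q * x (q * p)) * hk
  · intro q _ _ h
    exact hpne (mul_left_cancel (h.trans (mul_one q).symm))
  · intro q _
    rw [mul_assoc, hsq p, mul_one]
end

section
/- The Cayley-Dickson twist γ is anticommutative off the axes and diagonal: for all p, q with 0 ≠ p ≠ q ≠ 0, γ(p,q) = -γ(q,p). -/
/-- The Cayley-Dickson twist, defined recursively by γ(0,0) = 1,
γ(2p,2q) = γ(p,q), γ(2p+1,2q) = γ(q,p),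
γ(2p,2q+1) = -γ(p,q) if p ≠ 0 and 1 if p = 0,
γ(2p+1,2q+1) = γ(q,p) if p ≠ 0 and -1 if p = 0. -/
def cdTwist (p q : ℕ) : ℤ :=
  if p = 0 ∧ q = 0 then 1
  else if p % 2 = 0 then
    if q % 2 = 0 then cdTwist (p / 2) (q / 2)
    else if p / 2 = 0 then 1 else -cdTwist (p / 2) (q / 2)
  else
    if q % 2 = 0 then cdTwist (q / 2) (p / 2)
    else if p / 2 = 0 then -1 else cdTwist (q / 2) (p / 2)
termination_by p + q
decreasing_by all_goals omega

theorem cdTwist_zero_left (n : ℕ) : cdTwist 0 n = 1 := by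
  induction n using Nat.strong_induction_on with
  | _ n ih =>
    rw [cdTwist]
    by_cases h : n = 0
    · simp [h]
    · by_cases h2 : n % 2 = 0
      · simpa [h, h2] using ih (n / 2) (by omega)
      · simp [h, h2]

theorem cdTwist_anticomm_aux : ∀ n p q, p + q = n → p ≠ 0 → q ≠ 0 → p ≠ q →
    cdTwist p q = -cdTwist q p := by
  intro n
  induction n using Nat.strong_induction_on with
  | _ n ih =>
    intro p q hn hp hq hpq
    conv_lhs => rw [cdTwist]
    conv_rhs => rw [cdTwist]
    by_cases hp2 : p % 2 = 0 <;> by_cases hq2 : q % 2 = 0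
    · have ha : p / 2 ≠ 0 := by omega
      have hb : q / 2 ≠ 0 := by omega
      have hab : p / 2 ≠ q / 2 := by omega
      simpa [hp, hq, hp2, hq2] using
        ih (p / 2 + q / 2) (by omega) (p / 2) (q / 2) rfl ha hb hab
    · have ha : p / 2 ≠ 0 := by omega
      simp [hp, hq, hp2, hq2, ha]
    · have hb : q / 2 ≠ 0 := by omega
      simp [hp, hq, hp2, hq2, hb]
    · by_cases ha : p / 2 = 0 <;> by_cases hb : q / 2 = 0
      · omega
      · simp [hp, hq, hp2, hq2, ha, hb, cdTwist_zero_left]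
      · simp [hp, hq, hp2, hq2, ha, hb, cdTwist_zero_left]
      · have hab : p / 2 ≠ q / 2 := by omega
        simpa [hp, hq, hp2, hq2, ha, hb] using
          (ih (q / 2 + p / 2) (by omega) (q / 2) (p / 2) rfl hb ha hab.symm)

/-- The Cayley-Dickson twist is anticommutative off the axes and diagonal. -/
theorem cdTwist_anticomm (p q : ℕ) (hp : p ≠ 0) (hq : q ≠ 0) (hpq : p ≠ q) :
    cdTwist p q = -cdTwist q p := by
  exact cdTwist_anticomm_aux (p + q) p q rfl hp hq hpq
end
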